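/- arXiv:2405.21039 — 4 statements merged into one kernel-verified Lean document; each statement's English description precedes it below -/
import Mathlib

section
/- Let a, d, ψ be positive integers with a² + d² = ψ² and d > 0. Then the polynomial a·X² + 2aψ·X + a³ (with integer coefficients) has two distinct integer roots. -/
open Polynomial

theorem pythagorean_quadratic_eq_mul {R : Type*} [CommRing R] {a d ψ : R}
    (hpyth : a ^ 2 + d ^ 2 = ψ ^ 2) :
    C a * X ^ 2 + C (2 * a * ψ) * X + C (a ^ 3) =
      C a * ((X - C (-ψ + d)) * (X - C (-ψ - d))) := by
  have hcube : a ^ 3 = a * (ψ ^ 2 - d ^ 2) := by linear_combination a * hpyth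
  rw [hcube]
  simp only [C_mul, C_sub, C_add, C_neg, C_pow, C_ofNat]
  ring

theorem quadratic_from_pythagorean_triple_two_distinct_integer_roots_general
    (a d ψ : ℤ) (hd : 0 < d)
    (hpyth : a ^ 2 + d ^ 2 = ψ ^ 2) :
    ∃ x₁ x₂ : ℤ, x₁ ≠ x₂ ∧
      (C a * X ^ 2 + C (2 * a * ψ) * X + C (a ^ 3)).IsRoot x₁ ∧
      (C a * X ^ 2 + C (2 * a * ψ) * X + C (a ^ 3)).IsRoot x₂ := by
  rw [pythagorean_quadratic_eq_mul hpyth]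
  exact ⟨-ψ + d, -ψ - d, by omega, by simp, by simp⟩

open Polynomial in
theorem quadratic_from_pythagorean_triple_two_distinct_integer_roots
    (a d ψ : ℤ) (ha : 0 < a) (hψ : 0 < ψ) (hd : 0 < d)
    (hpyth : a ^ 2 + d ^ 2 = ψ ^ 2) :
    ∃ x₁ x₂ : ℤ, x₁ ≠ x₂ ∧
      (C a * X ^ 2 + C (2 * a * ψ) * X + C (a ^ 3)).IsRoot x₁ ∧
      (C a * X ^ 2 + C (2 * a * ψ) * X + C (a ^ 3)).IsRoot x₂ :=
  quadratic_from_pythagorean_triple_two_distinct_integer_roots_general a d ψ hd hpyth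
end

section
/- For every natural number i, setting a = Fᵢ·Fᵢ₊₃ and ψ = Fᵢ₊₁² + Fᵢ₊₂², the integers θ₁ = -(Fᵢ₊₂ - Fᵢ₊₁)² and θ₂ = -(Fᵢ₊₁ + Fᵢ₊₂)² are roots of the quadratic a·x² + 2aψ·x + a³, i.e., a·θ₁² + 2aψ·θ₁ + a³ = 0 and a·θ₂² + 2aψ·θ₂ + a³ = 0 (as integers). -/
/-! For a Pythagorean triple a² + b² = c² the quadratic factors as
a·x² + 2ac·x + a³ = a·((x + c)² - b²), so its roots are -(c - b) and -(c + b).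
The Fibonacci triple is Euclid's triple for m = Fᵢ₊₁, n = Fᵢ₊₂, because Fᵢ = n - m and
Fᵢ₊₃ = m + n; then c ∓ b = (n ∓ m)², which are the two claimed roots. -/

theorem quadratic_eq_zero_of_pythagorean {R : Type*} [CommRing R] {a b c x : R}
    (h : a * a + b * b = c * c) (hx : (x + c) ^ 2 = b ^ 2) :
    a * x ^ 2 + 2 * a * c * x + a ^ 3 = 0 := by
  linear_combination a * hx + a * h

theorem pythagoreanTriple_euclid (m n : ℤ) :
    PythagoreanTriple ((n - m) * (m + n)) (2 * m * n) (m ^ 2 + n ^ 2) := by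
  unfold PythagoreanTriple
  ring

theorem Nat.fib_pythagoreanTriple (i : ℕ) :
    PythagoreanTriple (fib i * fib (i + 3)) (2 * fib (i + 1) * fib (i + 2))
      (fib (i + 1) ^ 2 + fib (i + 2) ^ 2) := by
  have h_fib : (fib i : ℤ) = fib (i + 2) - fib (i + 1) := by
    rw [fib_add_two]; push_cast; ring
  have h_fib_three : (fib (i + 3) : ℤ) = fib (i + 1) + fib (i + 2) :=
    mod_cast fib_add_two (n := i + 1)
  rw [h_fib, h_fib_three]
  exact pythagoreanTriple_euclid _ _

theorem fib_quadratic_roots_f (i : ℕ) :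
    ((Nat.fib i * Nat.fib (i + 3) : ℤ) * (-(((Nat.fib (i + 2) : ℤ) - Nat.fib (i + 1)) ^ 2)) ^ 2
      + 2 * (Nat.fib i * Nat.fib (i + 3) : ℤ) * ((Nat.fib (i + 1) : ℤ) ^ 2 + (Nat.fib (i + 2) : ℤ) ^ 2)
          * (-(((Nat.fib (i + 2) : ℤ) - Nat.fib (i + 1)) ^ 2))
      + (Nat.fib i * Nat.fib (i + 3) : ℤ) ^ 3 = 0) ∧
    ((Nat.fib i * Nat.fib (i + 3) : ℤ) * (-(((Nat.fib (i + 1) : ℤ) + Nat.fib (i + 2)) ^ 2)) ^ 2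
      + 2 * (Nat.fib i * Nat.fib (i + 3) : ℤ) * ((Nat.fib (i + 1) : ℤ) ^ 2 + (Nat.fib (i + 2) : ℤ) ^ 2)
          * (-(((Nat.fib (i + 1) : ℤ) + Nat.fib (i + 2)) ^ 2))
      + (Nat.fib i * Nat.fib (i + 3) : ℤ) ^ 3 = 0) := by
  have h_triple := Nat.fib_pythagoreanTriple i
  exact ⟨quadratic_eq_zero_of_pythagorean h_triple (by ring),
    quadratic_eq_zero_of_pythagorean h_triple (by ring)⟩
end

section
/- For every natural number i ≥ 1, let f : ℝ → ℝ be f(x) = (Fᵢ·Fᵢ₊₃)x² + 2(Fᵢ·Fᵢ₊₃)(Fᵢ₊₁² + Fᵢ₊₂²)x + (Fᵢ·Fᵢ₊₃)³, and let θ₁ = -(Fᵢ₊₂ - Fᵢ₊₁)² and θ₂ = -(Fᵢ₊₁ + Fᵢ₊₂)² be its roots. Then the integral ∫ from θ₂ to θ₁ of f(x) dx is an integer, i.e., there exists k ∈ ℤ with ∫_{θ₂}^{θ₁} f(x) dx = k. -/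
theorem integral_f_between_roots_is_integer (i : ℕ) (hi : 1 ≤ i) :
    ∃ k : ℤ,
      (∫ x in (-(((Nat.fib (i + 1) : ℝ) + Nat.fib (i + 2)) ^ 2))..(-(((Nat.fib (i + 2) : ℝ) - Nat.fib (i + 1)) ^ 2)),
        ((Nat.fib i * Nat.fib (i + 3) : ℝ) * x ^ 2
          + 2 * (Nat.fib i * Nat.fib (i + 3) : ℝ)
              * ((Nat.fib (i + 1) : ℝ) ^ 2 + (Nat.fib (i + 2) : ℝ) ^ 2) * x
          + (Nat.fib i * Nat.fib (i + 3) : ℝ) ^ 3)) = (k : ℝ) := by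
  -- divisibility: 3 ∣ product of 4 consecutive Fibonacci numbers
  have h3 : (3 : ℕ) ∣ Nat.fib i * Nat.fib (i+1) * Nat.fib (i+2) * Nat.fib (i+3) := by
    have h4 : 4 ∣ i ∨ 4 ∣ (i+1) ∨ 4 ∣ (i+2) ∨ 4 ∣ (i+3) := by omega
    have hf : ∀ n, 4 ∣ n → (3:ℕ) ∣ Nat.fib n := by
      intro n hn
      have := Nat.fib_dvd 4 n hn
      simpa [show Nat.fib 4 = 3 by decide] using this
    rcases h4 with h | h | h | h
    · exact Dvd.dvd.mul_right (Dvd.dvd.mul_right (Dvd.dvd.mul_right (hf _ h) _) _) _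
    · exact Dvd.dvd.mul_right (Dvd.dvd.mul_right (Dvd.dvd.mul_left (hf _ h) _) _) _
    · exact Dvd.dvd.mul_right (Dvd.dvd.mul_left (hf _ h) _) _
    · exact Dvd.dvd.mul_left (hf _ h) _
  obtain ⟨d, hd⟩ := h3
  set u : ℝ := (Nat.fib (i+1) : ℝ) with hu
  set v : ℝ := (Nat.fib (i+2) : ℝ) with hv
  have hfi : (Nat.fib i : ℝ) = v - u := by
    have : Nat.fib (i+2) = Nat.fib i + Nat.fib (i+1) := Nat.fib_add_two
    simp only [u, v]
    push_cast [this]; ring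
  have hfi3 : (Nat.fib (i+3) : ℝ) = u + v := by
    have : Nat.fib (i+3) = Nat.fib (i+1) + Nat.fib (i+2) := Nat.fib_add_two
    simp only [u, v]
    push_cast [this]; ring
  have hd' : (v - u) * u * v * (u + v) = 3 * (d : ℝ) := by
    rw [← hfi, ← hfi3]
    have := congrArg (fun n : ℕ => (n : ℝ)) hd
    push_cast at this
    linarith [this]
  refine ⟨-32 * (Nat.fib (i+1) : ℤ)^2 * (Nat.fib (i+2) : ℤ)^2 * d, ?_⟩
  set A : ℝ := (Nat.fib i * Nat.fib (i+3) : ℝ) with hA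
  set B : ℝ := 2 * (Nat.fib i * Nat.fib (i+3) : ℝ) * ((Nat.fib (i+1) : ℝ)^2 + (Nat.fib (i+2) : ℝ)^2) with hB
  set C : ℝ := (Nat.fib i * Nat.fib (i+3) : ℝ)^3 with hC
  have hint : ∀ θ₂ θ₁ : ℝ,
      (∫ x in θ₂..θ₁, (A * x ^ 2 + B * x + C)) =
        (A * θ₁^3/3 + B * θ₁^2/2 + C * θ₁) - (A * θ₂^3/3 + B * θ₂^2/2 + C * θ₂) := by
    intro θ₂ θ₁
    apply intervalIntegral.integral_eq_sub_of_hasDerivAt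
    · intro x _
      have h1 : HasDerivAt (fun x : ℝ => A * x^3/3 + B * x^2/2 + C * x)
          (A * (3 * x^2)/3 + B * (2 * x^1)/2 + C * 1) x := by
        exact ((((hasDerivAt_pow 3 x).const_mul A).div_const 3).add
          (((hasDerivAt_pow 2 x).const_mul B).div_const 2)).add ((hasDerivAt_id x).const_mul C)
      exact h1.congr_deriv (by ring)
    · exact (Continuous.intervalIntegrable (by continuity) _ _)
  rw [show (∫ x in (-((u + v) ^ 2))..(-((v - u) ^ 2)),
        (A * x ^ 2 + B * x + C)) =
      (A * (-((v-u)^2))^3/3 + B * (-((v-u)^2))^2/2 + C * (-((v-u)^2)))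
      - (A * (-((u+v)^2))^3/3 + B * (-((u+v)^2))^2/2 + C * (-((u+v)^2))) from hint _ _]
  rw [hA, hB, hC, hfi, hfi3]
  push_cast
  field_simp
  rw [show ((Nat.fib (i+1) : ℕ) : ℝ) = u from hu.symm, show ((Nat.fib (i+2) : ℕ) : ℝ) = v from hv.symm]
  clear_value u v
  linear_combination (-32*u^2*v^2) * hd'
end

section
/- For every natural number i ≥ 1, with ψ = Fᵢ₊₁² + Fᵢ₊₂² and δ = Fᵢ·Fᵢ₊₃, 3 divides the integer 2·Fᵢ₊₁·Fᵢ₊₂·((-ψ + δ)³ - (-ψ - δ)³). -/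
open Finset

-- Some index in `[n, n + k)` is a multiple of `k`, and `fib k ∣ fib (q * k)`.
theorem Nat.fib_dvd_prod_range_fib_add (n : ℕ) {k : ℕ} (hk : 0 < k) :
    Nat.fib k ∣ ∏ j ∈ range k, Nat.fib (n + j) := by
  set m := (n + k - 1) / k * k
  have hm_le : m ≤ n + k - 1 := Nat.div_mul_le_self _ _
  have hm_gt : n + k - 1 < m + k := Nat.lt_div_mul_add hk
  have hmem : m - n ∈ range k := mem_range.mpr (by omega)
  have hm : n + (m - n) = m := by omega
  calc Nat.fib k ∣ Nat.fib m := Nat.fib_dvd _ _ (Nat.dvd_mul_left k _)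
    _ = Nat.fib (n + (m - n)) := by rw [hm]
    _ ∣ ∏ j ∈ range k, Nat.fib (n + j) := dvd_prod_of_mem _ hmem

theorem Nat.three_dvd_fib_mul_fib_succ_mul_fib_add_two_mul_fib_add_three (n : ℕ) :
    3 ∣ Nat.fib n * Nat.fib (n + 1) * Nat.fib (n + 2) * Nat.fib (n + 3) := by
  have h := Nat.fib_dvd_prod_range_fib_add n (k := 4) (by norm_num)
  rwa [show Nat.fib 4 = 3 by rfl, prod_range_succ, prod_range_succ, prod_range_succ,
    prod_range_one, add_zero] at h

theorem three_dvd_leading_term_g_general (i : ℕ) :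
    (3 : ℤ) ∣ 2 * (Nat.fib (i + 1) : ℤ) * Nat.fib (i + 2) *
      ((-((Nat.fib (i + 1) : ℤ) ^ 2 + (Nat.fib (i + 2) : ℤ) ^ 2) + (Nat.fib i : ℤ) * Nat.fib (i + 3)) ^ 3
        - (-((Nat.fib (i + 1) : ℤ) ^ 2 + (Nat.fib (i + 2) : ℤ) ^ 2) - (Nat.fib i : ℤ) * Nat.fib (i + 3)) ^ 3) := by
  have hprod : (3 : ℤ) ∣ Nat.fib i * Nat.fib (i + 1) * Nat.fib (i + 2) * Nat.fib (i + 3) := by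
    exact_mod_cast Nat.three_dvd_fib_mul_fib_succ_mul_fib_add_two_mul_fib_add_three i
  set a := (Nat.fib i : ℤ)
  set b := (Nat.fib (i + 1) : ℤ)
  set c := (Nat.fib (i + 2) : ℤ)
  set d := (Nat.fib (i + 3) : ℤ)
  -- `(δ - ψ)³ - (-δ - ψ)³ = 2δ(3ψ² + δ²)` with `δ = a d`, so the product `a b c d` factors out.
  have hfactor : 2 * b * c * ((-(b ^ 2 + c ^ 2) + a * d) ^ 3 - (-(b ^ 2 + c ^ 2) - a * d) ^ 3)
      = a * b * c * d * (4 * (3 * (b ^ 2 + c ^ 2) ^ 2 + (a * d) ^ 2)) := by ring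
  rw [hfactor]
  exact dvd_mul_of_dvd_left hprod _

theorem three_dvd_leading_term_g (i : ℕ) (hi : 1 ≤ i) :
    (3 : ℤ) ∣ 2 * (Nat.fib (i + 1) : ℤ) * Nat.fib (i + 2) *
      ((-((Nat.fib (i + 1) : ℤ) ^ 2 + (Nat.fib (i + 2) : ℤ) ^ 2) + (Nat.fib i : ℤ) * Nat.fib (i + 3)) ^ 3
        - (-((Nat.fib (i + 1) : ℤ) ^ 2 + (Nat.fib (i + 2) : ℤ) ^ 2) - (Nat.fib i : ℤ) * Nat.fib (i + 3)) ^ 3) :=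
  three_dvd_leading_term_g_general i
end
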